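/- The function f̄ given by f̄(z) = βu₀/r - (1/r)(θ₂(u₀)e^{θ₁(u₀)z} + θ₁(u₀)e^{-θ₂(u₀)z})/((θ₁(u₀)+θ₂(u₀))e^{θ₁(u₀)d}) is strictly concave and strictly decreasing on (0,d]. -/

import Mathlib

open Real Set

noncomputable def th1 (μ σ r u : ℝ) : ℝ := (Real.sqrt ((μ - u)^2 + 2*r*σ^2) + (μ - u)) / σ^2
noncomputable def th2 (μ σ r u : ℝ) : ℝ := (Real.sqrt ((μ - u)^2 + 2*r*σ^2) - (μ - u)) / σ^2

noncomputable def fbar (μ σ r d u₀ β z : ℝ) : ℝ :=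
  β * u₀ / r - (1/r) * (th2 μ σ r u₀ * Real.exp (th1 μ σ r u₀ * z) + th1 μ σ r u₀ * Real.exp (-(th2 μ σ r u₀) * z)) /
    ((th1 μ σ r u₀ + th2 μ σ r u₀) * Real.exp (th1 μ σ r u₀ * d))

/-!
With `a = θ₁ > 0` and `b = θ₂ > 0`, `f̄` is a constant minus a positive multiple of
`g(z) = b e^{az} + a e^{-bz}`. Here `g' = ab (e^{az} - e^{-bz})`, positive for `z > 0`, and
`g'' = ab (a e^{az} + b e^{-bz}) > 0`, so `g` is strictly convex, and strictly increasing on `[0, ∞)`.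
-/

lemma StrictConvexOn.const_mul {E : Type*} [AddCommMonoid E] [Module ℝ E] {s : Set E}
    {f : E → ℝ} (hf : StrictConvexOn ℝ s f) {k : ℝ} (hk : 0 < k) :
    StrictConvexOn ℝ s fun x => k * f x := by
  refine ⟨hf.1, fun x hx y hy hxy α β hα hβ hαβ => ?_⟩
  have h := hf.2 hx hy hxy hα hβ hαβ
  simp only [smul_eq_mul] at h ⊢
  nlinarith

lemma abs_lt_sqrt_sq_add (x : ℝ) {c : ℝ} (hc : 0 < c) : |x| < √(x ^ 2 + c) := by
  rw [Real.lt_sqrt (abs_nonneg x), sq_abs]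
  linarith

section Theta

variable {μ σ r : ℝ}

lemma th1_pos (hσ : σ ≠ 0) (hr : 0 < r) (u : ℝ) : 0 < th1 μ σ r u := by
  have h := abs_lt_sqrt_sq_add (μ - u) (by positivity : 0 < 2 * r * σ ^ 2)
  have := neg_abs_le (μ - u)
  exact div_pos (by linarith) (by positivity)

lemma th2_pos (hσ : σ ≠ 0) (hr : 0 < r) (u : ℝ) : 0 < th2 μ σ r u := by
  have h := abs_lt_sqrt_sq_add (μ - u) (by positivity : 0 < 2 * r * σ ^ 2)
  have := le_abs_self (μ - u)
  exact div_pos (by linarith) (by positivity)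

end Theta

lemma hasDerivAt_exp_pair (a b z : ℝ) :
    HasDerivAt (fun x => b * exp (a * x) + a * exp (-b * x))
      (a * b * (exp (a * z) - exp (-b * z))) z := by
  have h₁ := ((hasDerivAt_id' z).const_mul a).exp.const_mul b
  have h₂ := ((hasDerivAt_id' z).const_mul (-b)).exp.const_mul a
  exact (h₁.add h₂).congr_deriv (by ring)

lemma deriv_exp_pair (a b : ℝ) :
    deriv (fun z => b * exp (a * z) + a * exp (-b * z)) =
      fun z => a * b * (exp (a * z) - exp (-b * z)) :=
  funext fun z => (hasDerivAt_exp_pair a b z).deriv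

lemma hasDerivAt_deriv_exp_pair (a b z : ℝ) :
    HasDerivAt (fun x => a * b * (exp (a * x) - exp (-b * x)))
      (a * b * (a * exp (a * z) + b * exp (-b * z))) z := by
  have h₁ := ((hasDerivAt_id' z).const_mul a).exp
  have h₂ := ((hasDerivAt_id' z).const_mul (-b)).exp
  exact ((h₁.sub h₂).const_mul (a * b)).congr_deriv (by ring)

lemma strictConvexOn_exp_pair {a b : ℝ} (ha : 0 < a) (hb : 0 < b) :
    StrictConvexOn ℝ univ fun z => b * exp (a * z) + a * exp (-b * z) := by
  refine strictConvexOn_univ_of_deriv2_pos (by fun_prop) fun z => ?_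
  rw [Function.iterate_succ_apply, Function.iterate_one, deriv_exp_pair,
    (hasDerivAt_deriv_exp_pair a b z).deriv]
  positivity

lemma strictMonoOn_exp_pair {a b : ℝ} (ha : 0 < a) (hb : 0 < b) :
    StrictMonoOn (fun z => b * exp (a * z) + a * exp (-b * z)) (Ici 0) := by
  refine strictMonoOn_of_deriv_pos (convex_Ici 0) (by fun_prop) fun z hz => ?_
  rw [interior_Ici] at hz
  have hexp : exp (-b * z) < exp (a * z) := exp_lt_exp.2 (by nlinarith [mem_Ioi.1 hz])
  rw [deriv_exp_pair]
  exact mul_pos (mul_pos ha hb) (sub_pos.2 hexp)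

theorem stmt10_general (μ σ r d u₀ β : ℝ) (hσ : 0 < σ) (hr : 0 < r) :
    StrictConcaveOn ℝ (Set.Ioc 0 d) (fbar μ σ r d u₀ β) ∧
    StrictAntiOn (fbar μ σ r d u₀ β) (Set.Ioc 0 d) := by
  set a := th1 μ σ r u₀
  set b := th2 μ σ r u₀
  have ha : 0 < a := th1_pos hσ.ne' hr u₀
  have hb : 0 < b := th2_pos hσ.ne' hr u₀
  set k := 1 / (r * ((a + b) * exp (a * d)))
  have hk : 0 < k := by positivity
  have hfbar : fbar μ σ r d u₀ β =
      (fun _ => β * u₀ / r) - fun z => k * (b * exp (a * z) + a * exp (-b * z)) := by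
    funext z
    simp only [fbar, Pi.sub_apply, k, a, b]
    field_simp
  have hIoc : Ioc 0 d ⊆ Ici 0 := Ioc_subset_Icc_self.trans Icc_subset_Ici_self
  rw [hfbar]
  constructor
  · exact (concaveOn_const _ (convex_Ioc 0 d)).sub_strictConvexOn
      (((strictConvexOn_exp_pair ha hb).subset (subset_univ _) (convex_Ioc 0 d)).const_mul hk)
  · intro x hx y hy hxy
    exact sub_lt_sub_left
      (mul_lt_mul_of_pos_left (strictMonoOn_exp_pair ha hb (hIoc hx) (hIoc hy) hxy) hk) _

theorem stmt10 (μ σ r d u₀ β : ℝ) (hσ : 0 < σ) (hr : 0 < r) (hd : 0 < d) (hu₀ : 0 < u₀)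
    (hβ : 0 < β) :
    StrictConcaveOn ℝ (Set.Ioc 0 d) (fbar μ σ r d u₀ β) ∧
    StrictAntiOn (fbar μ σ r d u₀ β) (Set.Ioc 0 d) :=
  stmt10_general μ σ r d u₀ β hσ hr
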